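/- Let (W_t) be a family of bounded self-adjoint operators on a finite-dimensional inner product space V with second-order expansion W_t = λI + Ẇ(t−t₀) + ½Ẅ(t−t₀)² + o(t−t₀)². Let μ be an eigenvalue of Ẇ with eigenprojection P⁽ⁱ⁾, and let ν be an eigenvalue of P⁽ⁱ⁾ẄP⁽ⁱ⁾ restricted to ran(P⁽ⁱ⁾). Then there is a choice of eigenvalue λ(t) ∈ Spec(W_t) for t near t₀ such that λ(t) = λ + μ(t−t₀) + ½ν(t−t₀)² + o(t−t₀)². -/

import Mathlib

/-!
Put `s = t - t₀` and let `w` solve `(Ẇ - μ) w = ½ (ν - Ẅ) v`; the equation is solvable because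
its right-hand side is killed by `P⁽ⁱ⁾`, and for self-adjoint operators `ker P⁽ⁱ⁾ = (ran P⁽ⁱ⁾)ᗮ =
(ker (Ẇ - μ))ᗮ = ran (Ẇ - μ)`. With this choice the quadratic part of `W_t` maps `v + s w` to
`(λ + μ s + ½ ν s²) (v + s w)` up to `O(s³)`, so `v + s w` is an eigenvector of `W_t` up to
`o(s²)`. For a self-adjoint `A`, expanding `u` in an orthonormal eigenbasis shows that some
eigenvalue `r` satisfies `|r - x| ‖u‖ ≤ ‖A u - x u‖`, which turns the approximate eigenvector into
an eigenvalue `λ(t)` of `W_t` within `o(s²)` of `λ + μ s + ½ ν s²`.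
-/

open scoped Topology
open Asymptotics Filter

theorem ContinuousLinearMap.mem_spectrum_of_hasEigenvalue {𝕜 M : Type*} [NormedField 𝕜]
    [NormedAddCommGroup M] [NormedSpace 𝕜 M] {A : M →L[𝕜] M} {μ : 𝕜}
    (h : Module.End.HasEigenvalue (A : M →ₗ[𝕜] M) μ) : μ ∈ spectrum 𝕜 A := by
  rw [spectrum.mem_iff]
  intro hunit
  refine h.mem_spectrum ?_
  rw [spectrum.mem_resolventSet_iff]
  simpa [Algebra.algebraMap_eq_smul_one] using hunit.map ContinuousLinearMap.toLinearMapRingHom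

theorem LinearMap.IsSymmetric.ker_eq_range_of_range_eq_ker {𝕜 E : Type*} [RCLike 𝕜]
    [NormedAddCommGroup E] [InnerProductSpace 𝕜 E] [FiniteDimensional 𝕜 E] {P S : E →ₗ[𝕜] E}
    (hP : P.IsSymmetric) (hS : S.IsSymmetric) (h : LinearMap.range P = LinearMap.ker S) :
    LinearMap.ker P = LinearMap.range S := by
  rw [← hP.orthogonal_range, h, ← hS.orthogonal_range, Submodule.orthogonal_orthogonal]

theorem Asymptotics.IsLittleO.apply_of_tendsto {α 𝕜 E F G : Type*} [NontriviallyNormedField 𝕜]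
    [NormedAddCommGroup E] [NormedSpace 𝕜 E] [NormedAddCommGroup F] [NormedSpace 𝕜 F] [Norm G]
    {l : Filter α} {T : α → E →L[𝕜] F} {g : α → G} {u : α → E} {v : E} (hT : T =o[l] g)
    (hu : Tendsto u l (𝓝 v)) : (fun t => T t (u t)) =o[l] g := by
  have hbound : (fun t => ‖T t‖ * ‖u t‖) =O[l] fun t => ‖T t‖ := by
    simpa using (isBigO_refl (fun t => ‖T t‖) l).mul (hu.norm.isBigO_one ℝ)
  exact isBoundedBilinearMap_apply.isBigO_comp.trans_isLittleO (hbound.trans_isLittleO hT.norm_left)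

theorem Asymptotics.isLittleO_sub_pow_smul_const {𝕜 E : Type*} [NormedField 𝕜]
    [NormedAddCommGroup E] [NormedSpace 𝕜 E] (x₀ : 𝕜) (c : E) {m n : ℕ} (h : n < m) :
    (fun x => (x - x₀) ^ m • c) =o[𝓝 x₀] fun x => (x - x₀) ^ n := by
  have hpow := (isLittleO_pow_pow (𝕜 := 𝕜) h).comp_tendsto
    (tendsto_sub_nhds_zero_iff.2 (tendsto_id (x := 𝓝 x₀)))
  simpa using hpow.smul_isBigO (isBigO_const_const c (one_ne_zero (α := 𝕜)) (𝓝 x₀))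

section

variable {V : Type*} [NormedAddCommGroup V] [InnerProductSpace ℂ V]

theorem quadratic_apply_sub_eq_cube_smul {Wd Wdd : V →L[ℂ] V} {lam μ ν : ℝ} {v w : V}
    (hv : Wd v = μ • v) (hw : Wd w = μ • w + (ν / 2) • v - (1 / 2 : ℝ) • Wdd v) (s : ℝ) :
    (lam • (1 : V →L[ℂ] V) + s • Wd + (s ^ 2 / 2) • Wdd) (v + s • w)
        - (lam + μ * s + ν / 2 * s ^ 2) • (v + s • w)
      = s ^ 3 • ((1 / 2 : ℝ) • Wdd w - (ν / 2) • w) := by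
  simp only [add_apply, smul_apply, one_apply_eq_self, map_add,
    ContinuousLinearMap.map_smul_of_tower, hv, hw]
  module

theorem exists_second_order_corrector [FiniteDimensional ℂ V] {Wd Wdd Pi : V →L[ℂ] V} {μ ν : ℝ}
    {v : V} (hWd : IsSelfAdjoint Wd) (hPi : IsSelfAdjoint Pi)
    (hPirange : LinearMap.range (Pi : V →ₗ[ℂ] V)
      = LinearMap.ker ((Wd - (μ : ℂ) • (1 : V →L[ℂ] V) : V →L[ℂ] V) : V →ₗ[ℂ] V))
    (hvPi : Pi v = v) (hνeig : Pi (Wdd v) = (ν : ℂ) • v) :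
    ∃ w, Wd w = μ • w + (ν / 2) • v - (1 / 2 : ℝ) • Wdd v := by
  have hz : (ν / 2) • v - (1 / 2 : ℝ) • Wdd v ∈ LinearMap.ker (Pi : V →ₗ[ℂ] V) := by
    rw [LinearMap.mem_ker, ContinuousLinearMap.coe_coe, map_sub,
      ContinuousLinearMap.map_smul_of_tower, ContinuousLinearMap.map_smul_of_tower, hvPi, hνeig,
      Complex.coe_smul]
    module
  have hS : IsSelfAdjoint (Wd - (μ : ℂ) • (1 : V →L[ℂ] V)) :=
    hWd.sub (.smul (Complex.conj_ofReal μ) (.one _))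
  rw [hPi.isSymmetric.ker_eq_range_of_range_eq_ker hS.isSymmetric hPirange] at hz
  obtain ⟨w, hw⟩ := hz
  refine ⟨w, ?_⟩
  simp only [ContinuousLinearMap.coe_coe, sub_apply, smul_apply, one_apply_eq_self,
    Complex.coe_smul] at hw
  rw [add_sub_assoc, ← hw]
  abel

theorem IsSelfAdjoint.exists_mem_spectrum_abs_sub_mul_norm_le [FiniteDimensional ℂ V]
    [Nontrivial V] {A : V →L[ℂ] V} (hA : IsSelfAdjoint A) (x : ℝ) (u : V) :
    ∃ r : ℝ, (r : ℂ) ∈ spectrum ℂ A ∧ |r - x| * ‖u‖ ≤ ‖A u - x • u‖ := by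
  have hT : (A : V →ₗ[ℂ] V).IsSymmetric := hA.isSymmetric
  have hn : Module.finrank ℂ V = Module.finrank ℂ V := rfl
  have : Nonempty (Fin (Module.finrank ℂ V)) := ⟨⟨0, Module.finrank_pos⟩⟩
  set B := hT.eigenvectorBasis hn
  set e := hT.eigenvalues hn
  obtain ⟨i, hi⟩ := Finite.exists_min fun j => |e j - x|
  refine ⟨e i,
    ContinuousLinearMap.mem_spectrum_of_hasEigenvalue (hT.hasEigenvalue_eigenvalues hn i), ?_⟩
  have hrepr : ∀ j, B.repr (A u - x • u) j = ((e j - x : ℝ) : ℂ) * B.repr u j := fun j => by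
    have hAu := hT.eigenvectorBasis_apply_self_apply hn u j
    rw [ContinuousLinearMap.coe_coe] at hAu
    rw [← Complex.coe_smul]
    simp only [map_sub, map_smul, WithLp.ofLp_sub, WithLp.ofLp_smul, Pi.sub_apply, Pi.smul_apply,
      smul_eq_mul, B, e, hAu]
    simp [sub_mul]
  have hsq : (|e i - x| * ‖u‖) ^ 2 ≤ ‖A u - x • u‖ ^ 2 := calc
    (|e i - x| * ‖u‖) ^ 2 = ∑ j, |e i - x| ^ 2 * ‖B.repr u j‖ ^ 2 := by
      rw [mul_pow, ← B.repr.norm_map, EuclideanSpace.norm_sq_eq, Finset.mul_sum]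
    _ ≤ ∑ j, |e j - x| ^ 2 * ‖B.repr u j‖ ^ 2 := by
      refine Finset.sum_le_sum fun j _ => ?_
      exact mul_le_mul_of_nonneg_right (pow_le_pow_left₀ (abs_nonneg _) (hi j) 2) (by positivity)
    _ = ‖A u - x • u‖ ^ 2 := by
      rw [← B.repr.norm_map, EuclideanSpace.norm_sq_eq]
      simp only [hrepr, norm_mul, Complex.norm_real, Real.norm_eq_abs, mul_pow, sq_abs]
  exact (pow_le_pow_iff_left₀ (by positivity) (norm_nonneg _) two_ne_zero).mp hsq

theorem exists_mem_spectrum_sub_isLittleO_of_residual [FiniteDimensional ℂ V] {α F : Type*}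
    [Norm F] {l : Filter α} {g : α → F} {A : α → V →L[ℂ] V} (hA : ∀ t, IsSelfAdjoint (A t))
    {x : α → ℝ} {u : α → V} {v : V} (hv : v ≠ 0) (hu : Tendsto u l (𝓝 v))
    (hres : (fun t => A t (u t) - x t • u t) =o[l] g) :
    ∃ r : α → ℝ, (∀ t, (r t : ℂ) ∈ spectrum ℂ (A t)) ∧ (fun t => r t - x t) =o[l] g := by
  have : Nontrivial V := ⟨v, 0, hv⟩
  choose r hr using fun t => (hA t).exists_mem_spectrum_abs_sub_mul_norm_le (x t) (u t)
  refine ⟨r, fun t => (hr t).1, IsBigO.trans_isLittleO ?_ hres⟩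
  have hvpos : 0 < ‖v‖ := norm_pos_iff.2 hv
  refine IsBigO.of_bound (2 / ‖v‖) ?_
  filter_upwards [hu.norm.eventually (lt_mem_nhds (half_lt_self hvpos))] with t ht
  have hr' : |r t - x t| * (‖v‖ / 2) ≤ ‖A t (u t) - x t • u t‖ :=
    (mul_le_mul_of_nonneg_left ht.le (abs_nonneg _)).trans (hr t).2
  rw [Real.norm_eq_abs, div_mul_eq_mul_div, le_div_iff₀ hvpos]
  linarith

end

theorem eigenvalue_curve_second_order_general
    {V : Type*} [NormedAddCommGroup V] [InnerProductSpace ℂ V] [FiniteDimensional ℂ V]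
    (W : ℝ → (V →L[ℂ] V)) (t₀ : ℝ)
    (hW : ∀ t, IsSelfAdjoint (W t))
    (lam : ℝ) (Wd Wdd : V →L[ℂ] V)
    (hWd : IsSelfAdjoint Wd)
    (hexp : (fun t => W t - (lam • (1 : V →L[ℂ] V) + (t - t₀) • Wd
        + ((t - t₀) ^ 2 / 2) • Wdd)) =o[𝓝 t₀] fun t => (t - t₀) ^ 2)
    (μ : ℝ) (Pi : V →L[ℂ] V)
    (hPi : IsIdempotentElem Pi ∧ IsSelfAdjoint Pi)
    (hPirange : LinearMap.range (Pi : V →ₗ[ℂ] V) = LinearMap.ker ((Wd - (μ : ℂ) • (1 : V →L[ℂ] V) : V →L[ℂ] V) : V →ₗ[ℂ] V))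
    (ν : ℝ) (v : V) (hv : v ≠ 0) (hvPi : Pi v = v)
    (hνeig : Pi (Wdd v) = (ν : ℂ) • v) :
    ∃ lamt : ℝ → ℝ,
      (∀ᶠ t in 𝓝 t₀, (lamt t : ℂ) ∈ spectrum ℂ (W t)) ∧
      (fun t => lamt t - (lam + μ * (t - t₀) + ν / 2 * (t - t₀) ^ 2))
        =o[𝓝 t₀] fun t => (t - t₀) ^ 2 := by
  have hWdv : Wd v = μ • v := by
    have : v ∈ LinearMap.ker ((Wd - (μ : ℂ) • 1 : V →L[ℂ] V) : V →ₗ[ℂ] V) := by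
      rw [← hPirange]
      exact ⟨v, hvPi⟩
    simpa [sub_eq_zero, Complex.coe_smul] using this
  obtain ⟨w, hw⟩ := exists_second_order_corrector hWd hPi.2 hPirange hvPi hνeig
  have hu : Tendsto (fun t => v + (t - t₀) • w) (𝓝 t₀) (𝓝 v) :=
    (continuous_const.add ((continuous_sub_right t₀).smul continuous_const)).tendsto' t₀ v
      (by simp)
  have hres : (fun t => W t (v + (t - t₀) • w)
      - (lam + μ * (t - t₀) + ν / 2 * (t - t₀) ^ 2) • (v + (t - t₀) • w)) =o[𝓝 t₀]
      fun t => (t - t₀) ^ 2 := by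
    have hcube := isLittleO_sub_pow_smul_const t₀ ((1 / 2 : ℝ) • Wdd w - (ν / 2) • w)
      (by norm_num : 2 < 3)
    refine ((hexp.apply_of_tendsto hu).add hcube).congr_left fun t => ?_
    rw [← quadratic_apply_sub_eq_cube_smul hWdv hw, sub_apply]
    abel
  obtain ⟨lamt, hspec, hlamt⟩ := exists_mem_spectrum_sub_isLittleO_of_residual hW hv hu hres
  exact ⟨lamt, .of_forall hspec, hlamt⟩

/-- Kato selection to second order: for a family of self-adjoint operators
`W_t = λI + Ẇ(t-t₀) + ½Ẅ(t-t₀)² + o((t-t₀)²)` on a finite-dimensional complex inner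
product space, an eigenvalue `μ` of `Ẇ` with eigenprojection `P⁽ⁱ⁾`, and an eigenvalue `ν`
of the compression `P⁽ⁱ⁾ Ẅ P⁽ⁱ⁾` on `ran P⁽ⁱ⁾`, there is a choice of eigenvalue
`λ(t) ∈ Spec(W_t)` with `λ(t) = λ + μ(t-t₀) + ½ν(t-t₀)² + o((t-t₀)²)`. -/
theorem eigenvalue_curve_second_order
    {V : Type*} [NormedAddCommGroup V] [InnerProductSpace ℂ V] [FiniteDimensional ℂ V]
    (W : ℝ → (V →L[ℂ] V)) (t₀ : ℝ)
    (hW : ∀ t, IsSelfAdjoint (W t))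
    (lam : ℝ) (Wd Wdd : V →L[ℂ] V)
    (hWd : IsSelfAdjoint Wd) (hWdd : IsSelfAdjoint Wdd)
    (hexp : (fun t => W t - (lam • (1 : V →L[ℂ] V) + (t - t₀) • Wd
        + ((t - t₀) ^ 2 / 2) • Wdd)) =o[𝓝 t₀] fun t => (t - t₀) ^ 2)
    (μ : ℝ) (Pi : V →L[ℂ] V)
    (hPi : IsIdempotentElem Pi ∧ IsSelfAdjoint Pi)
    (hPirange : LinearMap.range (Pi : V →ₗ[ℂ] V) = LinearMap.ker ((Wd - (μ : ℂ) • (1 : V →L[ℂ] V) : V →L[ℂ] V) : V →ₗ[ℂ] V))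
    (hPine : Pi ≠ 0)
    (ν : ℝ) (v : V) (hv : v ≠ 0) (hvPi : Pi v = v)
    (hνeig : Pi (Wdd v) = (ν : ℂ) • v) :
    ∃ lamt : ℝ → ℝ,
      (∀ᶠ t in 𝓝 t₀, (lamt t : ℂ) ∈ spectrum ℂ (W t)) ∧
      (fun t => lamt t - (lam + μ * (t - t₀) + ν / 2 * (t - t₀) ^ 2))
        =o[𝓝 t₀] fun t => (t - t₀) ^ 2 :=
  eigenvalue_curve_second_order_general W t₀ hW lam Wd Wdd hWd hexp μ Pi hPi hPirange ν v hv hvPi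
    hνeig
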